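/- Let C ⊂ P⁴ be a smooth nondegenerate quintic rational curve. Then C has exactly one 3-secant line L ⊂ P⁴ (a line meeting C in a scheme of length ≥ 3), and L is not a 4-secant line. -/

import Mathlib

open MvPolynomial

/-- The binary form of degree `n` obtained by restricting a linear functional `φ` on
`ℂⁿ⁺¹` to the rational normal curve `[s : t] ↦ [sⁿ : sⁿ⁻¹t : ⋯ : tⁿ]`. -/
noncomputable def restrictForm (n : ℕ) (φ : Module.Dual ℂ (Fin (n + 1) → ℂ)) :
    MvPolynomial (Fin 2) ℂ :=
  ∑ i : Fin (n + 1), C (φ (Pi.single i 1)) * (X 0 ^ (n - (i : ℕ)) * X 1 ^ (i : ℕ))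

/-- The linear span of the divisor on the rational normal curve of degree `n` cut out by a
binary form `g`: the common zero locus of the linear forms whose restriction to the curve
is divisible by `g`. -/
noncomputable def divisorSpan (n : ℕ) (g : MvPolynomial (Fin 2) ℂ) :
    Submodule ℂ (Fin (n + 1) → ℂ) :=
  ⨅ φ ∈ {φ : Module.Dual ℂ (Fin (n + 1) → ℂ) | g ∣ restrictForm n φ}, LinearMap.ker φ

/-- A smooth rational curve of degree `5` in `ℙ⁴` is the image of the rational normal
quintic under a linear projection `A : ℂ⁶ → ℂ⁵`.  A line `L ⊂ ℙ⁴` (a 2-dimensional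
subspace `L ⊂ ℂ⁵`) is a `k`-secant line of the curve if it meets the curve in a subscheme
of length at least `k`: there is a nonzero binary form `g` of degree `k` dividing the
restriction to the curve of every linear form vanishing on `L`. -/
def IsSecantLine (A : (Fin 6 → ℂ) →ₗ[ℂ] (Fin 5 → ℂ)) (k : ℕ)
    (L : Submodule ℂ (Fin 5 → ℂ)) : Prop :=
  Module.finrank ℂ L = 2 ∧
  ∃ g : MvPolynomial (Fin 2) ℂ, g.IsHomogeneous k ∧ g ≠ 0 ∧
    ∀ ψ : Module.Dual ℂ (Fin 5 → ℂ), L ≤ LinearMap.ker ψ →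
      g ∣ restrictForm 5 (ψ ∘ₗ A)

section TriAux

/-- exponent of the monomial `X0^(n-i) * X1^i` -/
noncomputable def mexp (n i : ℕ) : Fin 2 →₀ ℕ := Finsupp.single 0 (n - i) + Finsupp.single 1 i

lemma mexp_apply0 (n i : ℕ) : mexp n i 0 = n - i := by
  simp [mexp, Finsupp.single_apply]

lemma mexp_apply1 (n i : ℕ) : mexp n i 1 = i := by
  simp [mexp, Finsupp.single_apply]

lemma deg2 (d : Fin 2 →₀ ℕ) : d.degree = d 0 + d 1 := by
  rw [Finsupp.degree_apply, Finset.sum_subset (Finset.subset_univ _)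
    (fun x _ hx => Finsupp.notMem_support_iff.mp hx), Fin.sum_univ_two]

lemma mexp_degree {n i : ℕ} (h : i ≤ n) : (mexp n i).degree = n := by
  rw [deg2, mexp_apply0, mexp_apply1]; omega

lemma mexp_inj {n i k : ℕ} (h : mexp n i = mexp n k) : i = k := by
  have := congrArg (fun d => d 1) h
  simpa [mexp_apply1] using this

lemma mexp_add {d e i k : ℕ} (hi : i ≤ d) (hk : k ≤ e) :
    mexp d i + mexp e k = mexp (d + e) (i + k) := by
  have h0 : d - i + (e - k) = d + e - (i + k) := by omega
  simp only [mexp]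
  rw [add_add_add_comm, ← Finsupp.single_add, ← Finsupp.single_add, h0]

/-- the linear map sending coefficients to the corresponding binary form of degree `d` -/
noncomputable def Pf (d : ℕ) : (Fin (d + 1) → ℂ) →ₗ[ℂ] MvPolynomial (Fin 2) ℂ where
  toFun c := ∑ j : Fin (d + 1), monomial (mexp d j) (c j)
  map_add' x y := by simp [Finset.sum_add_distrib]
  map_smul' r x := by simp [Finset.smul_sum, smul_monomial]

lemma coeff_Pf (d : ℕ) (c : Fin (d + 1) → ℂ) (i : Fin (d + 1)) :
    coeff (mexp d i) (Pf d c) = c i := by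
  simp only [Pf, LinearMap.coe_mk, AddHom.coe_mk, coeff_sum, coeff_monomial]
  rw [Finset.sum_eq_single i]
  · simp
  · intro j _ hj
    rw [if_neg]
    intro h
    exact hj (Fin.ext (mexp_inj h))
  · simp

lemma Pf_isHomogeneous (d : ℕ) (c : Fin (d + 1) → ℂ) : (Pf d c).IsHomogeneous d := by
  apply MvPolynomial.IsHomogeneous.sum
  intro j _
  exact isHomogeneous_monomial _ (mexp_degree (Nat.lt_succ_iff.mp j.isLt))

lemma Pf_eq_zero {d : ℕ} {c : Fin (d + 1) → ℂ} (h : Pf d c = 0) : c = 0 := by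
  funext i
  have := coeff_Pf d c i
  rw [h, coeff_zero] at this
  exact this.symm

lemma Pf_injective (d : ℕ) : Function.Injective (Pf d) := by
  intro a b h
  have h1 : Pf d (a - b) = 0 := by rw [map_sub, h, sub_self]
  have := Pf_eq_zero h1
  exact sub_eq_zero.mp (by rwa [← sub_eq_zero] at this ⊢)

lemma expandHomog {d : ℕ} {f : MvPolynomial (Fin 2) ℂ} (hf : f.IsHomogeneous d) :
    Pf d (fun i => coeff (mexp d i) f) = f := by
  apply MvPolynomial.ext
  intro u
  simp only [Pf, LinearMap.coe_mk, AddHom.coe_mk, coeff_sum, coeff_monomial]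
  by_cases hex : ∃ j : Fin (d + 1), mexp d j = u
  · obtain ⟨j, hj⟩ := hex
    rw [Finset.sum_eq_single j]
    · rw [if_pos hj, hj]
    · intro b _ hb
      rw [if_neg]
      intro h
      exact hb (Fin.ext (mexp_inj (h.trans hj.symm)))
    · simp
  · rw [Finset.sum_eq_zero]
    · symm
      by_contra h0
      have hdeg : u.degree = d := by
        rw [Finsupp.degree_eq_weight_one]; exact hf h0
      rw [deg2] at hdeg
      refine hex ⟨⟨u 1, by omega⟩, ?_⟩
      apply Finsupp.ext
      intro x
      match x with
      | 0 => rw [show ((⟨u 1, by omega⟩ : Fin (d+1)) : ℕ) = u 1 from rfl, mexp_apply0]; omega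
      | 1 => rw [show ((⟨u 1, by omega⟩ : Fin (d+1)) : ℕ) = u 1 from rfl, mexp_apply1]
    · intro j _
      rw [if_neg (fun h => hex ⟨j, h⟩)]

lemma restrictForm_eq (n : ℕ) (φ : Module.Dual ℂ (Fin (n + 1) → ℂ)) :
    restrictForm n φ = Pf n (fun i => φ (Pi.single i 1)) := by
  simp only [restrictForm, Pf, LinearMap.coe_mk, AddHom.coe_mk]
  refine Finset.sum_congr rfl fun i _ => ?_
  rw [← mul_assoc, C_mul_X_pow_eq_monomial, X_pow_eq_monomial, monomial_mul, mul_one, mexp]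

lemma restrictForm_isHomogeneous (n : ℕ) (φ : Module.Dual ℂ (Fin (n + 1) → ℂ)) :
    (restrictForm n φ).IsHomogeneous n := by
  rw [restrictForm_eq]; exact Pf_isHomogeneous n _

lemma coeff_restrictForm (φ : Module.Dual ℂ (Fin 6 → ℂ)) (i : Fin 6) :
    coeff (mexp 5 i) (restrictForm 5 φ) = φ (Pi.single i 1) := by
  rw [restrictForm_eq]; exact coeff_Pf 5 _ i

/-- the dual functional of a quintic, pairing with points of `ℂ⁶` -/
noncomputable def dual6 : MvPolynomial (Fin 2) ℂ →ₗ[ℂ] Module.Dual ℂ (Fin 6 → ℂ) where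
  toFun f :=
    { toFun := fun x => ∑ i : Fin 6, x i * coeff (mexp 5 i) f
      map_add' := fun x y => by simp [add_mul, Finset.sum_add_distrib]
      map_smul' := fun r x => by simp [Finset.mul_sum, mul_assoc] }
  map_add' f g := by
    ext x; simp [mul_add, Finset.sum_add_distrib]
  map_smul' r f := by
    ext x; simp [Finset.mul_sum]; ring_nf; simp [mul_comm, mul_left_comm]

lemma dual6_apply (f : MvPolynomial (Fin 2) ℂ) (x : Fin 6 → ℂ) :
    dual6 f x = ∑ i : Fin 6, x i * coeff (mexp 5 i) f := rfl

lemma dual6_single (f : MvPolynomial (Fin 2) ℂ) (i : Fin 6) :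
    dual6 f (Pi.single i 1) = coeff (mexp 5 i) f := by
  rw [dual6_apply]
  rw [Finset.sum_eq_single i] <;> simp +contextual [Pi.single_apply]

lemma restrictForm_dual6 {f : MvPolynomial (Fin 2) ℂ} (hf : f.IsHomogeneous 5) :
    restrictForm 5 (dual6 f) = f := by
  rw [restrictForm_eq]
  have h : (fun i : Fin 6 => dual6 f (Pi.single i 1)) = fun i : Fin 6 => coeff (mexp 5 (i : ℕ)) f := by
    funext i; exact dual6_single f i
  rw [h]
  exact expandHomog hf

lemma dual6_restrictForm (φ : Module.Dual ℂ (Fin 6 → ℂ)) : dual6 (restrictForm 5 φ) = φ := by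
  apply LinearMap.pi_ext'
  intro i
  apply LinearMap.ext_ring
  simp only [LinearMap.coe_comp, Function.comp_apply, LinearMap.coe_single]
  rw [dual6_single, coeff_restrictForm]

/-- the restriction map, bundled -/
noncomputable def Rmap : Module.Dual ℂ (Fin 6 → ℂ) →ₗ[ℂ] MvPolynomial (Fin 2) ℂ where
  toFun φ := restrictForm 5 φ
  map_add' φ φ' := by
    show restrictForm 5 (φ + φ') = restrictForm 5 φ + restrictForm 5 φ'
    rw [restrictForm_eq, restrictForm_eq, restrictForm_eq, ← map_add]
    congr 1
  map_smul' r φ := by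
    show restrictForm 5 (r • φ) = r • restrictForm 5 φ
    rw [restrictForm_eq, restrictForm_eq, ← map_smul]
    congr 1

lemma Rmap_apply (φ : Module.Dual ℂ (Fin 6 → ℂ)) : Rmap φ = restrictForm 5 φ := rfl

lemma Pf_mul (d e : ℕ) (a : Fin (d + 1) → ℂ) (b : Fin (e + 1) → ℂ) :
    Pf d a * Pf e b =
      ∑ j : Fin (d + 1), ∑ k : Fin (e + 1),
        monomial (mexp (d + e) ((j : ℕ) + (k : ℕ))) (a j * b k) := by
  show (∑ j : Fin (d+1), monomial (mexp d j) (a j)) * (∑ k : Fin (e+1), monomial (mexp e k) (b k)) = _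
  rw [Finset.sum_mul_sum]
  refine Finset.sum_congr rfl fun j _ => Finset.sum_congr rfl fun k _ => ?_
  rw [monomial_mul, mexp_add (Nat.lt_succ_iff.mp j.isLt) (Nat.lt_succ_iff.mp k.isLt)]

lemma dual6_monomial_mexp {t : ℕ} (ht : t ≤ 5) (c : ℂ) (v : Fin 6 → ℂ) :
    dual6 (monomial (mexp 5 t) c) v = v ⟨t, by omega⟩ * c := by
  rw [dual6_apply, Finset.sum_eq_single (⟨t, by omega⟩ : Fin 6)]
  · rw [coeff_monomial, if_pos rfl]
  · intro i _ hi
    rw [coeff_monomial, if_neg, mul_zero]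
    intro h
    exact hi (Fin.ext (mexp_inj h).symm)
  · simp

/-- index addition into `Fin 6` -/
def fin6 (j : Fin 4) (k : Fin 3) : Fin 6 :=
  ⟨j.1 + k.1, by have := j.2; have := k.2; omega⟩

lemma dual6_cubic_mul_quad (a : Fin 4 → ℂ) (b : Fin 3 → ℂ) (v : Fin 6 → ℂ) :
    dual6 (Pf 3 a * Pf 2 b) v =
      ∑ j : Fin 4, ∑ k : Fin 3, a j * b k * v (fin6 j k) := by
  rw [Pf_mul, map_sum, LinearMap.sum_apply]
  refine Finset.sum_congr rfl fun j _ => ?_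
  rw [map_sum, LinearMap.sum_apply]
  refine Finset.sum_congr rfl fun k _ => ?_
  rw [dual6_monomial_mexp (by have := j.2; have := k.2; omega)]
  show v (fin6 j k) * (a j * b k) = _
  ring

/-- multiplication by a fixed form, on coefficient vectors -/
noncomputable def mulMap (g : MvPolynomial (Fin 2) ℂ) (e : ℕ) :
    (Fin (e + 1) → ℂ) →ₗ[ℂ] MvPolynomial (Fin 2) ℂ :=
  (LinearMap.mulLeft ℂ g).comp (Pf e)

lemma mulMap_apply (g : MvPolynomial (Fin 2) ℂ) (e : ℕ) (b : Fin (e + 1) → ℂ) :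
    mulMap g e b = g * Pf e b := rfl

/-- homogeneous division: a homogeneous divisor of a homogeneous quintic has a
homogeneous cofactor -/
lemma exists_homog_factor {g f : MvPolynomial (Fin 2) ℂ} {d : ℕ}
    (hg : g.IsHomogeneous d) (hf : f.IsHomogeneous 5)
    (hdvd : g ∣ f) (hd : d ≤ 5) :
    ∃ q : MvPolynomial (Fin 2) ℂ, q.IsHomogeneous (5 - d) ∧ f = g * q := by
  obtain ⟨h, rfl⟩ := hdvd
  refine ⟨homogeneousComponent (5 - d) h, homogeneousComponent_isHomogeneous _ _, ?_⟩
  by_cases hh : h = 0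
  · simp [hh]
  have hmem : ∀ i : ℕ, g * homogeneousComponent i h ∈ homogeneousSubmodule (Fin 2) ℂ (d + i) :=
    fun i => (mem_homogeneousSubmodule _ _).mpr
      (hg.mul (homogeneousComponent_isHomogeneous i h))
  have key : g * h = homogeneousComponent 5 (g * h) := by
    rw [homogeneousComponent_of_mem ((mem_homogeneousSubmodule _ _).mpr hf), if_pos rfl]
  conv_lhs => rw [key]
  conv_lhs => rw [← sum_homogeneousComponent h, Finset.mul_sum, map_sum]
  have hrw : ∀ i ∈ Finset.range (h.totalDegree + 1),
      homogeneousComponent 5 (g * homogeneousComponent i h) =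
        if i = 5 - d then g * homogeneousComponent i h else 0 := by
    intro i _
    rw [homogeneousComponent_of_mem (hmem i)]
    congr 1
    simp only [eq_iff_iff]
    omega
  rw [Finset.sum_congr rfl hrw, Finset.sum_ite_eq' (Finset.range (h.totalDegree + 1))]
  by_cases hr : 5 - d ∈ Finset.range (h.totalDegree + 1)
  · rw [if_pos hr]
  · rw [if_neg hr]
    rw [homogeneousComponent_eq_zero _ h
      (by simp only [Finset.mem_range, Nat.lt_succ_iff, not_le] at hr; omega), mul_zero]

end TriAux

set_option maxHeartbeats 1000000

/-- A smooth nondegenerate quintic rational curve `C ⊂ ℙ⁴`, presented as the projection of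
the rational normal quintic `C' ⊂ ℙ⁵` by a surjection `A : ℂ⁶ → ℂ⁵` (nondegeneracy) whose
center `ker A` lies on no secant or tangent line of `C'` (smoothness: `ker A` meets the
span of no degree 2 divisor on `C'`), has exactly one 3-secant line `L ⊂ ℙ⁴`, and this
line is not a 4-secant line. -/
theorem unique_trisecant_of_nondegenerate_quintic
    (A : (Fin 6 → ℂ) →ₗ[ℂ] (Fin 5 → ℂ))
    (hnondeg : Function.Surjective A)
    (hsmooth : ∀ g : MvPolynomial (Fin 2) ℂ, g.IsHomogeneous 2 → g ≠ 0 →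
      LinearMap.ker A ⊓ divisorSpan 5 g = ⊥) :
    (∃! L : Submodule ℂ (Fin 5 → ℂ), IsSecantLine A 3 L) ∧
    ∀ L : Submodule ℂ (Fin 5 → ℂ), IsSecantLine A 3 L → ¬ IsSecantLine A 4 L := by
  classical
  -- the center of projection
  have hker1 : Module.finrank ℂ (LinearMap.ker A) = 1 := by
    have h := LinearMap.finrank_range_add_finrank_ker A
    rw [LinearMap.range_eq_top.mpr hnondeg, finrank_top, Module.finrank_fin_fun,
      Module.finrank_fin_fun] at h
    omega
  obtain ⟨v, hvker, hvne⟩ : ∃ v, v ∈ LinearMap.ker A ∧ v ≠ 0 := by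
    apply Submodule.exists_mem_ne_zero_of_ne_bot
    intro hbot
    rw [hbot, finrank_bot] at hker1
    omega
  have hkspan : LinearMap.ker A = Submodule.span ℂ {v} := by
    symm
    apply Submodule.eq_of_le_of_finrank_le ((Submodule.span_singleton_le_iff_mem _ _).mpr hvker)
    rw [hker1, finrank_span_singleton hvne]
  -- the Hankel matrix of the center
  have hbridge : ∀ (a : Fin 4 → ℂ) (b : Fin 3 → ℂ),
      dual6 (Pf 3 a * Pf 2 b) v = dotProduct a (Matrix.mulVec (Matrix.of fun j k => v (fin6 j k)) b) := by
    intro a b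
    rw [dual6_cubic_mul_quad]
    simp only [dotProduct, Matrix.mulVec, Matrix.of_apply, Finset.mul_sum]
    exact Finset.sum_congr rfl fun j _ => Finset.sum_congr rfl fun k _ => by ring
  have hbridgeT : ∀ (a : Fin 4 → ℂ) (b : Fin 3 → ℂ),
      dual6 (Pf 3 a * Pf 2 b) v = dotProduct (Matrix.mulVec (Matrix.transpose (Matrix.of fun j k => v (fin6 j k))) a) b := by
    intro a b
    rw [hbridge, Matrix.mulVec_transpose, ← Matrix.dotProduct_mulVec]
  -- smoothness makes the Hankel matrix injective on quadratics
  have hHv : ∀ b : Fin 3 → ℂ, b ≠ 0 → Matrix.mulVec (Matrix.of fun j k => v (fin6 j k)) b ≠ 0 := by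
    intro b hbne hzero
    have hgne : Pf 2 b ≠ 0 := fun h =>
      hbne (Pf_injective 2 (by rw [h, map_zero]))
    have hbot := hsmooth (Pf 2 b) (Pf_isHomogeneous 2 b) hgne
    have hvdiv : v ∉ divisorSpan 5 (Pf 2 b) := by
      intro hv
      have hmem : v ∈ LinearMap.ker A ⊓ divisorSpan 5 (Pf 2 b) := ⟨hvker, hv⟩
      rw [hbot] at hmem
      exact hvne ((Submodule.mem_bot ℂ).mp hmem)
    rw [divisorSpan] at hvdiv
    simp only [Submodule.mem_iInf, LinearMap.mem_ker, Set.mem_setOf_eq, not_forall] at hvdiv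
    obtain ⟨φ, hφdvd, hφv⟩ := hvdiv
    obtain ⟨q, hq3, hfq⟩ := exists_homog_factor (Pf_isHomogeneous 2 b)
      (restrictForm_isHomogeneous 5 φ) hφdvd (by norm_num)
    have hq3' : q.IsHomogeneous 3 := hq3
    apply hφv
    have h1 : φ v = dual6 (restrictForm 5 φ) v := by rw [dual6_restrictForm]
    rw [h1, hfq, ← expandHomog hq3', mul_comm, hbridge, hzero, dotProduct_zero]
  have hrankinj : Function.Injective (Matrix.of fun j k => v (fin6 j k)).mulVecLin := by
    rw [← LinearMap.ker_eq_bot]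
    apply LinearMap.ker_eq_bot'.mpr
    intro b hb
    by_contra hbne
    exact hHv b hbne (by simpa [Matrix.mulVecLin_apply] using hb)
  have hrank : (Matrix.of fun j k => v (fin6 j k)).rank = 3 := by
    rw [Matrix.rank, LinearMap.finrank_range_of_inj hrankinj, Module.finrank_fin_fun]
  -- the kernel of the transposed Hankel matrix is one-dimensional
  have hkerT : Module.finrank ℂ
      (LinearMap.ker (Matrix.transpose (Matrix.of fun j k => v (fin6 j k))).mulVecLin) = 1 := by
    have h := LinearMap.finrank_range_add_finrank_ker
      ((Matrix.transpose (Matrix.of fun j k => v (fin6 j k))).mulVecLin)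
    have h2 : Module.finrank ℂ
        (LinearMap.range (Matrix.transpose (Matrix.of fun j k => v (fin6 j k))).mulVecLin) = 3 := by
      have h3 : (Matrix.transpose (Matrix.of fun j k => v (fin6 j k))).rank = 3 := by
        rw [Matrix.rank_transpose]; exact hrank
      rw [Matrix.rank] at h3
      exact h3
    rw [h2, Module.finrank_fin_fun] at h
    omega
  obtain ⟨a₀, ha₀K, ha₀ne⟩ : ∃ a₀, a₀ ∈
      LinearMap.ker (Matrix.transpose (Matrix.of fun j k => v (fin6 j k))).mulVecLin ∧ a₀ ≠ 0 := by
    apply Submodule.exists_mem_ne_zero_of_ne_bot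
    intro hbot
    rw [hbot, finrank_bot] at hkerT
    omega
  have hKspan : LinearMap.ker (Matrix.transpose (Matrix.of fun j k => v (fin6 j k))).mulVecLin
      = Submodule.span ℂ {a₀} := by
    symm
    apply Submodule.eq_of_le_of_finrank_le ((Submodule.span_singleton_le_iff_mem _ _).mpr ha₀K)
    rw [hkerT, finrank_span_singleton ha₀ne]
  -- perpendicularity criterion
  have hperp_iff : ∀ a : Fin 4 → ℂ,
      (∀ b : Fin 3 → ℂ, dual6 (Pf 3 a * Pf 2 b) v = 0) ↔
        Matrix.mulVec (Matrix.transpose (Matrix.of fun j k => v (fin6 j k))) a = 0 := by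
    intro a
    constructor
    · intro hall
      funext k
      have h1 := hall (Pi.single k 1)
      rw [hbridgeT, dotProduct_single, mul_one] at h1
      exact h1
    · intro h0 b
      rw [hbridgeT, h0, zero_dotProduct]
  have hg₀perp : ∀ b : Fin 3 → ℂ, dual6 (Pf 3 a₀ * Pf 2 b) v = 0 :=
    (hperp_iff a₀).mpr (by
    have h := LinearMap.mem_ker.mp ha₀K
    rwa [Matrix.mulVecLin_apply] at h)
  have hg₀ne : Pf 3 a₀ ≠ 0 := fun h => ha₀ne (Pf_injective 3 (by rw [h, map_zero]))
  -- factor functionals through A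
  obtain ⟨σ, hσ⟩ := A.exists_rightInverse_of_surjective (LinearMap.range_eq_top.mpr hnondeg)
  have hσap : ∀ y, A (σ y) = y := fun y => by
    have := LinearMap.ext_iff.mp hσ y
    simpa using this
  have hRAap : ∀ ψ : Module.Dual ℂ (Fin 5 → ℂ),
      (Rmap ∘ₗ A.dualMap) ψ = restrictForm 5 (ψ ∘ₗ A) := fun ψ => by
    rw [LinearMap.comp_apply, Rmap_apply, LinearMap.dualMap_apply']
  have hRAinj : Function.Injective (Rmap ∘ₗ A.dualMap) := by
    intro ψ ψ' h
    apply LinearMap.dualMap_injective_iff.mpr hnondeg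
    rw [← dual6_restrictForm (A.dualMap ψ), ← dual6_restrictForm (A.dualMap ψ')]
    exact congrArg dual6 h
  -- the family of functionals cutting out the trisecant line
  set φq : (Fin 3 → ℂ) →ₗ[ℂ] Module.Dual ℂ (Fin 6 → ℂ) :=
    dual6 ∘ₗ mulMap (Pf 3 a₀) 2 with hφqdef
  set ψq : (Fin 3 → ℂ) →ₗ[ℂ] Module.Dual ℂ (Fin 5 → ℂ) := σ.dualMap ∘ₗ φq with hψqdef
  have hφqv : ∀ b, φq b v = 0 := fun b => by
    rw [hφqdef]
    simpa [mulMap_apply] using hg₀perp b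
  have hcomp : ∀ b, (ψq b) ∘ₗ A = φq b := by
    intro b
    apply LinearMap.ext
    intro x
    show φq b (σ (A x)) = φq b x
    have hxk : x - σ (A x) ∈ LinearMap.ker A := by
      rw [LinearMap.mem_ker, map_sub, hσap, sub_self]
    rw [hkspan, Submodule.mem_span_singleton] at hxk
    obtain ⟨c, hc⟩ := hxk
    have h2 : φq b (x - σ (A x)) = 0 := by rw [← hc, map_smul, hφqv, smul_zero]
    rw [map_sub] at h2
    have := sub_eq_zero.mp h2
    exact this.symm
  have hRAψ : ∀ b, (Rmap ∘ₗ A.dualMap) (ψq b) = Pf 3 a₀ * Pf 2 b := by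
    intro b
    rw [hRAap, hcomp b, hφqdef]
    show restrictForm 5 (dual6 (mulMap (Pf 3 a₀) 2 b)) = _
    rw [mulMap_apply]
    exact restrictForm_dual6 ((Pf_isHomogeneous 3 a₀).mul (Pf_isHomogeneous 2 b))
  have hcompmap : (Rmap ∘ₗ A.dualMap) ∘ₗ ψq = mulMap (Pf 3 a₀) 2 :=
    LinearMap.ext fun b => by rw [LinearMap.comp_apply, hRAψ, mulMap_apply]
  have hψqinj : Function.Injective ψq := by
    intro b b' h
    have h1 : Pf 3 a₀ * Pf 2 b = Pf 3 a₀ * Pf 2 b' := by rw [← hRAψ, ← hRAψ, h]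
    exact Pf_injective 2 (mul_left_cancel₀ hg₀ne h1)
  have hU3 : Module.finrank ℂ (LinearMap.range ψq) = 3 := by
    rw [LinearMap.finrank_range_of_inj hψqinj, Module.finrank_fin_fun]
  have hL2 : Module.finrank ℂ (LinearMap.range ψq).dualCoannihilator = 2 := by
    have h := Subspace.finrank_add_finrank_dualCoannihilator_eq (LinearMap.range ψq)
    rw [hU3, Module.finrank_fin_fun] at h
    omega
  have hannL : (LinearMap.range ψq).dualCoannihilator.dualAnnihilator = LinearMap.range ψq :=
    Subspace.dualCoannihilator_dualAnnihilator_eq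
  -- the trisecant line
  have hsecant : IsSecantLine A 3 (LinearMap.range ψq).dualCoannihilator := by
    refine ⟨hL2, Pf 3 a₀, Pf_isHomogeneous 3 a₀, hg₀ne, ?_⟩
    intro ψ hψ
    have hmem : ψ ∈ (LinearMap.range ψq).dualCoannihilator.dualAnnihilator := by
      rw [Submodule.mem_dualAnnihilator]
      exact fun w hw => LinearMap.mem_ker.mp (hψ hw)
    rw [hannL] at hmem
    obtain ⟨b, rfl⟩ := hmem
    exact ⟨Pf 2 b, (hRAap (ψq b)).symm.trans (hRAψ b)⟩
  -- the annihilator of any trisecant maps onto the multiples of its binary form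
  have hmap_eq : ∀ (L₂ : Submodule ℂ (Fin 5 → ℂ)) (g' : MvPolynomial (Fin 2) ℂ),
      Module.finrank ℂ L₂ = 2 → g'.IsHomogeneous 3 → g' ≠ 0 →
      (∀ ψ : Module.Dual ℂ (Fin 5 → ℂ), L₂ ≤ LinearMap.ker ψ →
        g' ∣ restrictForm 5 (ψ ∘ₗ A)) →
      Submodule.map (Rmap ∘ₗ A.dualMap) L₂.dualAnnihilator
        = LinearMap.range (mulMap g' 2) := by
    intro L₂ g' hfr2 hg'3 hg'ne hdvd
    have hann3 : Module.finrank ℂ L₂.dualAnnihilator = 3 := by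
      have h1 := LinearEquiv.finrank_eq (Subspace.quotEquivAnnihilator L₂)
      have h2 := Submodule.finrank_quotient_add_finrank L₂
      rw [Module.finrank_fin_fun] at h2
      omega
    have hle : Submodule.map (Rmap ∘ₗ A.dualMap) L₂.dualAnnihilator
        ≤ LinearMap.range (mulMap g' 2) := by
      rintro f ⟨ψ, hψ, rfl⟩
      have hker : L₂ ≤ LinearMap.ker ψ := fun w hw =>
        LinearMap.mem_ker.mpr ((Submodule.mem_dualAnnihilator ψ).mp hψ w hw)
      obtain ⟨q, hq2, hfq⟩ := exists_homog_factor hg'3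
        (restrictForm_isHomogeneous 5 (ψ ∘ₗ A)) (hdvd ψ hker) (by norm_num)
      have hq2' : q.IsHomogeneous 2 := hq2
      refine ⟨fun i => coeff (mexp 2 i) q, ?_⟩
      rw [mulMap_apply, expandHomog hq2', hRAap, hfq]
    have hd1 : Module.finrank ℂ
        (Submodule.map (Rmap ∘ₗ A.dualMap) L₂.dualAnnihilator) = 3 := by
      rw [← LinearEquiv.finrank_eq (Submodule.equivMapOfInjective _ hRAinj L₂.dualAnnihilator)]
      exact hann3
    have hd2 : Module.finrank ℂ (LinearMap.range (mulMap g' 2)) = 3 := by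
      have hinj : Function.Injective (mulMap g' 2) := by
        intro b b' h
        apply Pf_injective 2
        exact mul_left_cancel₀ hg'ne (by simpa [mulMap_apply] using h)
      rw [LinearMap.finrank_range_of_inj hinj, Module.finrank_fin_fun]
    exact Submodule.eq_of_le_of_finrank_le hle (by rw [hd1, hd2])
  have hmapU : Submodule.map (Rmap ∘ₗ A.dualMap) (LinearMap.range ψq)
      = LinearMap.range (mulMap (Pf 3 a₀) 2) := by
    rw [← LinearMap.range_comp, hcompmap]
  -- uniqueness
  have huniq : ∀ L₂ : Submodule ℂ (Fin 5 → ℂ), IsSecantLine A 3 L₂ →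
      L₂ = (LinearMap.range ψq).dualCoannihilator := by
    intro L₂ hL₂
    obtain ⟨hfr2, g', hg'3, hg'ne, hdvd⟩ := hL₂
    have hmapL₂ := hmap_eq L₂ g' hfr2 hg'3 hg'ne hdvd
    have hg'P : Pf 3 (fun i => coeff (mexp 3 i) g') = g' := expandHomog hg'3
    have ha'ne : (fun i : Fin 4 => coeff (mexp 3 (i : ℕ)) g') ≠ 0 := fun h =>
      hg'ne (by rw [← hg'P, h, map_zero])
    have hperp' : ∀ b : Fin 3 → ℂ,
        dual6 (Pf 3 (fun i => coeff (mexp 3 i) g') * Pf 2 b) v = 0 := by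
      intro b
      have hmem : g' * Pf 2 b ∈ LinearMap.range (mulMap g' 2) := ⟨b, rfl⟩
      rw [← hmapL₂] at hmem
      obtain ⟨ψ, hψ, heq⟩ := hmem
      rw [hg'P, ← heq, hRAap, dual6_restrictForm, LinearMap.comp_apply,
        LinearMap.mem_ker.mp hvker, map_zero]
    have ha'K : (fun i : Fin 4 => coeff (mexp 3 (i : ℕ)) g') ∈ Submodule.span ℂ {a₀} := by
      rw [← hKspan, LinearMap.mem_ker, Matrix.mulVecLin_apply]
      exact (hperp_iff _).mp hperp'
    obtain ⟨t, ht⟩ := Submodule.mem_span_singleton.mp ha'K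
    have htne : t ≠ 0 := fun h0 => ha'ne (by rw [← ht, h0, zero_smul])
    have hg't : g' = t • Pf 3 a₀ := by rw [← hg'P, ← ht, map_smul]
    have hrange : LinearMap.range (mulMap g' 2) = LinearMap.range (mulMap (Pf 3 a₀) 2) := by
      apply le_antisymm
      · rintro f ⟨b, rfl⟩
        refine ⟨t • b, ?_⟩
        rw [mulMap_apply, mulMap_apply, map_smul, mul_smul_comm, hg't, smul_mul_assoc]
      · rintro f ⟨b, rfl⟩
        refine ⟨t⁻¹ • b, ?_⟩
        rw [mulMap_apply, mulMap_apply, map_smul, mul_smul_comm, hg't, smul_mul_assoc,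
          smul_smul, inv_mul_cancel₀ htne, one_smul]
    have hanneq : L₂.dualAnnihilator = LinearMap.range ψq := by
      apply Submodule.map_injective_of_injective hRAinj
      rw [hmapL₂, hrange, hmapU]
    calc L₂ = L₂.dualAnnihilator.dualCoannihilator :=
          Subspace.dualAnnihilator_dualCoannihilator_eq.symm
      _ = (LinearMap.range ψq).dualCoannihilator := by rw [hanneq]
  refine ⟨⟨(LinearMap.range ψq).dualCoannihilator, hsecant, huniq⟩, ?_⟩
  -- no 4-secant
  intro L₃ h3 h4
  obtain ⟨hfr2, -⟩ := h3
  obtain ⟨-, g₄, hg₄h, hg₄ne, hdvd4⟩ := h4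
  have hann3 : Module.finrank ℂ L₃.dualAnnihilator = 3 := by
    have h1 := LinearEquiv.finrank_eq (Subspace.quotEquivAnnihilator L₃)
    have h2 := Submodule.finrank_quotient_add_finrank L₃
    rw [Module.finrank_fin_fun] at h2
    omega
  have hle : Submodule.map (Rmap ∘ₗ A.dualMap) L₃.dualAnnihilator
      ≤ LinearMap.range (mulMap g₄ 1) := by
    rintro f ⟨ψ, hψ, rfl⟩
    have hker : L₃ ≤ LinearMap.ker ψ := fun w hw =>
      LinearMap.mem_ker.mpr ((Submodule.mem_dualAnnihilator ψ).mp hψ w hw)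
    obtain ⟨q, hq1, hfq⟩ := exists_homog_factor hg₄h
      (restrictForm_isHomogeneous 5 (ψ ∘ₗ A)) (hdvd4 ψ hker) (by norm_num)
    have hq1' : q.IsHomogeneous 1 := hq1
    refine ⟨fun i => coeff (mexp 1 i) q, ?_⟩
    rw [mulMap_apply, expandHomog hq1', hRAap, hfq]
  have hd1 : Module.finrank ℂ
      (Submodule.map (Rmap ∘ₗ A.dualMap) L₃.dualAnnihilator) = 3 := by
    rw [← LinearEquiv.finrank_eq (Submodule.equivMapOfInjective _ hRAinj L₃.dualAnnihilator)]
    exact hann3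
  have hcontra : (3 : ℕ) ≤ 2 := by
    rw [← hd1]
    refine (Submodule.finrank_mono hle).trans ?_
    refine (LinearMap.finrank_range_le (mulMap g₄ 1)).trans ?_
    rw [Module.finrank_fin_fun]
  omega
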